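/- arXiv:1109.1995 — 4 statements merged into one kernel-verified Lean document; each statement's English description precedes it below -/
import Mathlib

section
/- Let n ≥ 2 be a natural number, c > 0 and C > 0 real constants, and let (μ_ℓ)_{ℓ∈ℕ} be a nondecreasing sequence of nonnegative real numbers tending to +∞ whose counting function N(s) = #{ℓ ∈ ℕ : μ_ℓ < s} satisfies |N(s) − c s^{(n−1)/2}| ≤ C s^{(n−2)/2} for all s ≥ 1. Then there exist C' > 0 and μ₁ ≥ 1 such that for all μ ≥ μ₁: |Σ_{ℓ=0}^{∞} ((μ − μ_ℓ)₊)^{1/2} − (c/2)·(Γ(1/2) Γ((n+1)/2) / Γ(1 + n/2))·μ^{n/2}| ≤ C' μ^{(n−1)/2}. -/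
open MeasureTheory Real

lemma real_beta_integral {u v : ℝ} (hu : 0 < u) (hv : 0 < v) :
    ∫ s in (0:ℝ)..1, s ^ (u - 1) * (1 - s) ^ (v - 1) =
      Real.Gamma u * Real.Gamma v / Real.Gamma (u + v) := by
  have h1 : ((∫ s in (0:ℝ)..1, s ^ (u - 1) * (1 - s) ^ (v - 1) : ℝ) : ℂ)
      = Complex.betaIntegral u v := by
    rw [← intervalIntegral.integral_ofReal, Complex.betaIntegral]
    apply intervalIntegral.integral_congr
    intro s hs
    rw [Set.uIcc_of_le (by norm_num : (0:ℝ) ≤ 1)] at hs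
    obtain ⟨hs0, hs1⟩ := hs
    beta_reduce
    rw [show ((u:ℂ) - 1) = ((u - 1 : ℝ) : ℂ) by push_cast; ring,
      show ((v:ℂ) - 1) = ((v - 1 : ℝ) : ℂ) by push_cast; ring,
      show (1 - (s:ℂ)) = ((1 - s : ℝ) : ℂ) by push_cast; ring,
      ← Complex.ofReal_cpow hs0, ← Complex.ofReal_cpow (by linarith : (0:ℝ) ≤ 1 - s)]
    push_cast
    ring
  have h2 := Complex.Gamma_mul_Gamma_eq_betaIntegral
    (by simpa using hu : 0 < Complex.re (u:ℂ)) (by simpa using hv : 0 < Complex.re (v:ℂ))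
  have h3 : Complex.Gamma ((u:ℂ) + (v:ℂ)) ≠ 0 := by
    rw [← Complex.ofReal_add, Complex.Gamma_ofReal]
    exact_mod_cast (Real.Gamma_pos_of_pos (by linarith)).ne'
  have h4 : Complex.betaIntegral u v
      = Complex.Gamma u * Complex.Gamma v / Complex.Gamma ((u:ℂ) + v) := by
    rw [eq_div_iff h3, mul_comm (Complex.betaIntegral u v), ← h2]
  rw [h4, ← Complex.ofReal_add, Complex.Gamma_ofReal, Complex.Gamma_ofReal,
    Complex.Gamma_ofReal] at h1
  exact_mod_cast h1

lemma beta_scaled {p q x : ℝ} (hp : -1 < p) (hq : -1 < q) (hx : 0 < x) :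
    ∫ s in (0:ℝ)..x, s ^ p * (x - s) ^ q
      = x ^ (p + q + 1) * (Real.Gamma (p + 1) * Real.Gamma (q + 1) / Real.Gamma (p + q + 2)) := by
  have hbeta := real_beta_integral (u := p + 1) (v := q + 1) (by linarith) (by linarith)
  have hsub := intervalIntegral.integral_comp_mul_left
    (a := (0:ℝ)) (b := 1) (fun s => s ^ p * (x - s) ^ q) (ne_of_gt hx)
  simp only [mul_zero, mul_one, smul_eq_mul] at hsub
  have hcong : ∫ t in (0:ℝ)..1, (x * t) ^ p * (x - x * t) ^ q
      = ∫ t in (0:ℝ)..1, x ^ (p + q) * (t ^ p * (1 - t) ^ q) := by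
    apply intervalIntegral.integral_congr
    intro t ht
    rw [Set.uIcc_of_le (by norm_num : (0:ℝ) ≤ 1)] at ht
    obtain ⟨ht0, ht1⟩ := ht
    beta_reduce
    rw [Real.mul_rpow hx.le ht0, show x - x * t = x * (1 - t) by ring,
      Real.mul_rpow hx.le (by linarith), Real.rpow_add hx]
    ring
  rw [hcong, intervalIntegral.integral_const_mul] at hsub
  have h2 : ∫ t in (0:ℝ)..1, t ^ p * (1 - t) ^ q
      = Real.Gamma (p + 1) * Real.Gamma (q + 1) / Real.Gamma (p + q + 2) := by
    rw [show p + q + 2 = p + 1 + (q + 1) by ring, ← hbeta]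
    apply intervalIntegral.integral_congr
    intro t ht
    norm_num
  rw [h2] at hsub
  have : x * (x ^ (p + q) * (Real.Gamma (p + 1) * Real.Gamma (q + 1) / Real.Gamma (p + q + 2)))
      = x * (x⁻¹ * ∫ s in (0:ℝ)..x, s ^ p * (x - s) ^ q) := by rw [hsub]
  rw [← mul_assoc, ← mul_assoc, mul_inv_cancel₀ (ne_of_gt hx), one_mul] at this
  rw [← this, Real.rpow_add_one (ne_of_gt hx)]
  ring

lemma integrable_sub_rpow {q x a b : ℝ} (hq : -1 < q) :
    IntervalIntegrable (fun s => (x - s) ^ q) MeasureTheory.volume a b := by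
  have h := (intervalIntegral.intervalIntegrable_rpow' (a := x - a) (b := x - b) hq).comp_sub_left x
  have e1 : x - (x - a) = a := by ring
  have e2 : x - (x - b) = b := by ring
  rwa [e1, e2] at h

lemma integrable_rpow_mul {p q x : ℝ} (hp : -1 < p) (hq : -1 < q) (hx : 0 < x) :
    IntervalIntegrable (fun s => s ^ p * (x - s) ^ q) MeasureTheory.volume 0 x := by
  apply IntervalIntegrable.trans (b := x / 2)
  · apply IntervalIntegrable.mul_continuousOn (intervalIntegral.intervalIntegrable_rpow' hp)
    intro s hs
    rw [Set.uIcc_of_le (by linarith)] at hs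
    have : (x - s) ≠ 0 := by
      intro h; nlinarith [hs.1, hs.2]
    exact ((Real.continuousAt_rpow_const _ q (Or.inl this)).comp
      ((continuous_const.sub continuous_id).continuousAt)).continuousWithinAt
  · apply IntervalIntegrable.continuousOn_mul (integrable_sub_rpow hq)
    intro s hs
    rw [Set.uIcc_of_le (by linarith)] at hs
    have : s ≠ 0 := by intro h; rw [h] at hs; have := hs.1; linarith
    exact (Real.continuousAt_rpow_const _ p (Or.inl this)).continuousWithinAt

lemma main_beta (n : ℕ) (hn : 2 ≤ n) {x : ℝ} (hx : 0 < x) :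
    ∫ s in (0:ℝ)..x, s ^ (((n:ℝ) - 1)/2) * (x - s) ^ (-(1/2) : ℝ)
      = (Real.Gamma (1/2) * Real.Gamma (((n:ℝ) + 1)/2) / Real.Gamma (1 + (n:ℝ)/2))
          * x ^ ((n:ℝ)/2) := by
  have hn0 : (0:ℝ) ≤ (n:ℝ) := Nat.cast_nonneg n
  have h := beta_scaled (p := ((n:ℝ) - 1)/2) (q := -(1/2)) (by linarith) (by norm_num) hx
  rw [h, show ((n:ℝ) - 1)/2 + -(1/2) + 1 = (n:ℝ)/2 by ring,
    show ((n:ℝ) - 1)/2 + 1 = ((n:ℝ) + 1)/2 by ring,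
    show (-(1/2:ℝ)) + 1 = 1/2 by norm_num,
    show ((n:ℝ) - 1)/2 + -(1/2) + 2 = 1 + (n:ℝ)/2 by ring]
  ring

lemma err_beta (n : ℕ) (hn : 2 ≤ n) {x : ℝ} (hx : 0 < x) :
    ∫ s in (0:ℝ)..x, s ^ (((n:ℝ) - 2)/2) * (x - s) ^ (-(1/2) : ℝ)
      = (Real.Gamma ((n:ℝ)/2) * Real.Gamma (1/2) / Real.Gamma (((n:ℝ) + 1)/2))
          * x ^ (((n:ℝ) - 1)/2) := by
  have hn2 : (2:ℝ) ≤ (n:ℝ) := by exact_mod_cast hn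
  have h := beta_scaled (p := ((n:ℝ) - 2)/2) (q := -(1/2)) (by linarith) (by norm_num) hx
  rw [h, show ((n:ℝ) - 2)/2 + -(1/2) + 1 = ((n:ℝ) - 1)/2 by ring,
    show ((n:ℝ) - 2)/2 + 1 = (n:ℝ)/2 by ring,
    show (-(1/2:ℝ)) + 1 = 1/2 by norm_num,
    show ((n:ℝ) - 2)/2 + -(1/2) + 2 = ((n:ℝ) + 1)/2 by ring]
  ring

lemma count_exists (μ : ℕ → ℝ) (hmono : Monotone μ) {s : ℝ} (h : ∃ m, s ≤ μ m) :
    ∃ k : ℕ, (∀ ℓ, μ ℓ < s ↔ ℓ < k) ∧ Nat.card {ℓ : ℕ | μ ℓ < s} = k := by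
  refine ⟨Nat.find h, fun ℓ => ?_, ?_⟩
  · constructor
    · intro hℓ
      by_contra hcon
      push_neg at hcon
      exact absurd (le_trans (Nat.find_spec h) (hmono hcon)) (not_le.mpr hℓ)
    · intro hℓ
      exact lt_of_not_ge (Nat.find_min h hℓ)
  · have hset : {ℓ : ℕ | μ ℓ < s} = Set.Iio (Nat.find h) := by
      ext ℓ
      simp only [Set.mem_setOf_eq, Set.mem_Iio]
      constructor
      · intro hℓ
        by_contra hcon
        push_neg at hcon
        exact absurd (le_trans (Nat.find_spec h) (hmono hcon)) (not_le.mpr hℓ)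
      · intro hℓ
        exact lt_of_not_ge (Nat.find_min h hℓ)
    rw [hset]
    simp
lemma rep_lemma (μ : ℕ → ℝ) (hmono : Monotone μ) (hnonneg : ∀ ℓ, 0 ≤ μ ℓ)
    (htend : Filter.Tendsto μ Filter.atTop Filter.atTop) {x : ℝ} (hx : 1 ≤ x) :
    IntervalIntegrable
      (fun s => (Nat.card {ℓ : ℕ | μ ℓ < s} : ℝ) * (x - s) ^ (-(1/2) : ℝ))
      MeasureTheory.volume 0 x ∧
    (∑' ℓ : ℕ, (max (x - μ ℓ) 0) ^ ((1:ℝ)/2)) =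
      (1/2) * ∫ s in (0:ℝ)..x, (Nat.card {ℓ : ℕ | μ ℓ < s} : ℝ) * (x - s) ^ (-(1/2) : ℝ) := by
  have hx0 : (0:ℝ) < x := by linarith
  have hex : ∀ s : ℝ, ∃ m, s ≤ μ m := fun s => (htend.eventually_ge_atTop s).exists
  obtain ⟨K, hKiff, hKcard⟩ := count_exists μ hmono (hex x)
  have hK : x ≤ μ K := by
    by_contra hcon
    push_neg at hcon
    exact lt_irrefl K ((hKiff K).mp hcon)
  have hltK : ∀ ℓ, ℓ < K → μ ℓ < x := fun ℓ hℓ => (hKiff ℓ).mpr hℓ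
  set r : ℝ → ℝ := fun s => (x - s) ^ (-(1/2) : ℝ) with hrdef
  set F : ℝ → ℝ := fun s => ∑ ℓ ∈ Finset.range K, Set.indicator (Set.Ioi (μ ℓ)) r s with hFdef
  -- pointwise equality on Icc 0 x
  have step0 : ∀ s ∈ Set.Icc (0:ℝ) x, (Nat.card {ℓ : ℕ | μ ℓ < s} : ℝ) * r s = F s := by
    intro s hs
    obtain ⟨Ks, hiff, hKscard⟩ := count_exists μ hmono (hex s)
    have hKs_le : Ks ≤ K := by
      by_contra hcon
      push_neg at hcon
      exact lt_irrefl K ((hKiff K).mp (lt_of_lt_of_le ((hiff K).mpr hcon) hs.2))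
    rw [hKscard, hFdef]
    simp only [Set.indicator_apply, Set.mem_Ioi]
    have : ∀ ℓ ∈ Finset.range K, (if μ ℓ < s then r s else 0)
        = (if ℓ ∈ Finset.range Ks then r s else 0) := by
      intro ℓ _
      simp only [Finset.mem_range, hiff ℓ]
    rw [Finset.sum_congr rfl this, ← Finset.sum_filter,
      Finset.filter_mem_eq_inter,
      Finset.inter_eq_right.mpr (by
        intro ℓ hℓ
        rw [Finset.mem_range] at hℓ ⊢
        exact lt_of_lt_of_le hℓ hKs_le),
      Finset.sum_const, nsmul_eq_mul, Finset.card_range]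
  -- integrability facts
  have hr_int : ∀ a b : ℝ, IntervalIntegrable r MeasureTheory.volume a b :=
    fun a b => integrable_sub_rpow (by norm_num)
  have hind : ∀ ℓ : ℕ, IntervalIntegrable (Set.indicator (Set.Ioi (μ ℓ)) r)
      MeasureTheory.volume 0 x := by
    intro ℓ
    have h := hr_int 0 x
    rw [intervalIntegrable_iff] at h ⊢
    exact MeasureTheory.Integrable.indicator h measurableSet_Ioi
  have hF_int : IntervalIntegrable F MeasureTheory.volume 0 x := by
    rw [hFdef]
    have h := IntervalIntegrable.sum (Finset.range K)
      (f := fun ℓ => Set.indicator (Set.Ioi (μ ℓ)) r) (fun ℓ _ => hind ℓ)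
    have e : (∑ i ∈ Finset.range K, (Set.Ioi (μ i)).indicator r)
        = fun s => ∑ ℓ ∈ Finset.range K, (Set.Ioi (μ ℓ)).indicator r s := by
      funext s
      simp [Finset.sum_apply]
    rwa [e] at h
  constructor
  · apply hF_int.congr
    intro s hs
    rw [Set.uIoc_of_le hx0.le] at hs
    exact (step0 s ⟨hs.1.le, hs.2⟩).symm
  · -- tsum to finite sum
    have hsum : (∑' ℓ : ℕ, (max (x - μ ℓ) 0) ^ ((1:ℝ)/2))
        = ∑ ℓ ∈ Finset.range K, (x - μ ℓ) ^ ((1:ℝ)/2) := by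
      rw [tsum_eq_sum (s := Finset.range K) (fun ℓ hℓ => by
        rw [Finset.mem_range] at hℓ
        push_neg at hℓ
        have hxl : x ≤ μ ℓ := le_trans hK (hmono hℓ)
        rw [max_eq_right (by linarith), Real.zero_rpow (by norm_num)])]
      apply Finset.sum_congr rfl
      intro ℓ hℓ
      rw [Finset.mem_range] at hℓ
      rw [max_eq_left (by linarith [hltK ℓ hℓ])]
    -- each indicator integral
    have hint_eval : ∀ ℓ, ℓ < K →
        ∫ s in (0:ℝ)..x, Set.indicator (Set.Ioi (μ ℓ)) r s
          = 2 * (x - μ ℓ) ^ ((1:ℝ)/2) := by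
      intro ℓ hℓ
      have hμl : μ ℓ < x := hltK ℓ hℓ
      have hμ0 : 0 ≤ μ ℓ := hnonneg ℓ
      rw [intervalIntegral.integral_of_le hx0.le]
      rw [MeasureTheory.integral_indicator measurableSet_Ioi]
      rw [Measure.restrict_restrict measurableSet_Ioi]
      have hsetE : Set.Ioi (μ ℓ) ∩ Set.Ioc 0 x = Set.Ioc (μ ℓ) x := by
        ext t
        simp only [Set.mem_inter_iff, Set.mem_Ioi, Set.mem_Ioc]
        constructor
        · rintro ⟨h1, _, h3⟩; exact ⟨h1, h3⟩
        · rintro ⟨h1, h2⟩; exact ⟨h1, lt_of_le_of_lt hμ0 h1, h2⟩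
      rw [hsetE, ← intervalIntegral.integral_of_le hμl.le]
      have hcomp := intervalIntegral.integral_comp_sub_left (a := μ ℓ) (b := x)
        (fun u => u ^ (-(1/2) : ℝ)) x
      rw [hrdef]
      rw [hcomp, sub_self]
      rw [integral_rpow (Or.inl (by norm_num))]
      have e : (-(1/2:ℝ) + 1) = 1/2 := by norm_num
      rw [e, Real.zero_rpow (by norm_num)]
      ring
    -- sum of integrals
    have hintsum : ∫ s in (0:ℝ)..x, F s
        = ∑ ℓ ∈ Finset.range K, ∫ s in (0:ℝ)..x, Set.indicator (Set.Ioi (μ ℓ)) r s := by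
      rw [hFdef]
      exact intervalIntegral.integral_finset_sum (fun ℓ _ => hind ℓ)
    have hNint : ∫ s in (0:ℝ)..x, (Nat.card {ℓ : ℕ | μ ℓ < s} : ℝ) * r s
        = ∫ s in (0:ℝ)..x, F s := by
      apply intervalIntegral.integral_congr
      intro s hs
      rw [Set.uIcc_of_le hx0.le] at hs
      exact step0 s hs
    rw [hsum, hNint, hintsum]
    rw [Finset.sum_congr rfl (fun ℓ hℓ => hint_eval ℓ (Finset.mem_range.mp hℓ))]
    rw [Finset.mul_sum]
    apply Finset.sum_congr rfl
    intro ℓ _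
    ring

set_option maxHeartbeats 1000000 in
/-- If the counting function `N(s) = #{ℓ : μ_ℓ < s}` of a nondecreasing sequence
`(μ_ℓ)` of nonnegative reals tending to `+∞` satisfies
`|N(s) − c s^{(n−1)/2}| ≤ C s^{(n−2)/2}` for `s ≥ 1`, then
`Σ_ℓ ((μ − μ_ℓ)₊)^{1/2} = (c/2)(Γ(1/2)Γ((n+1)/2)/Γ(1+n/2)) μ^{n/2} + O(μ^{(n−1)/2})`. -/
theorem sum_sqrt_pos_part_asymptotics
    (n : ℕ) (hn : 2 ≤ n) (c C : ℝ) (hc : 0 < c) (hC : 0 < C)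
    (μ : ℕ → ℝ) (hmono : Monotone μ) (hnonneg : ∀ ℓ, 0 ≤ μ ℓ)
    (htend : Filter.Tendsto μ Filter.atTop Filter.atTop)
    (hN : ∀ s : ℝ, 1 ≤ s →
      |(Nat.card {ℓ : ℕ | μ ℓ < s} : ℝ) - c * s ^ (((n : ℝ) - 1) / 2)|
        ≤ C * s ^ (((n : ℝ) - 2) / 2)) :
    ∃ C' > 0, ∃ μ₁ : ℝ, 1 ≤ μ₁ ∧ ∀ x : ℝ, μ₁ ≤ x →
      |(∑' ℓ : ℕ, (max (x - μ ℓ) 0) ^ ((1 : ℝ) / 2))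
          - (c / 2) * (Real.Gamma (1 / 2) * Real.Gamma (((n : ℝ) + 1) / 2)
              / Real.Gamma (1 + (n : ℝ) / 2)) * x ^ ((n : ℝ) / 2)|
        ≤ C' * x ^ (((n : ℝ) - 1) / 2) := by
  have hn2 : (2:ℝ) ≤ (n:ℝ) := by exact_mod_cast hn
  set B₂ : ℝ := Real.Gamma ((n:ℝ)/2) * Real.Gamma (1/2) / Real.Gamma (((n:ℝ) + 1)/2) with hB₂def
  have hB₂ : 0 < B₂ :=
    div_pos (mul_pos (Real.Gamma_pos_of_pos (by linarith)) (Real.Gamma_pos_of_pos (by norm_num)))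
      (Real.Gamma_pos_of_pos (by linarith))
  have hCB₂ : 0 < C * B₂ := mul_pos hC hB₂
  refine ⟨(2*c + C)/2 + C * B₂/2 + 1, by linarith, 2, by norm_num, ?_⟩
  intro x hx2
  have hx1 : (1:ℝ) ≤ x := by linarith
  have hx0 : (0:ℝ) < x := by linarith
  have hex : ∀ s : ℝ, ∃ m, s ≤ μ m := fun s => (htend.eventually_ge_atTop s).exists
  obtain ⟨hint, heq⟩ := rep_lemma μ hmono hnonneg htend hx1
  have hp : (-1:ℝ) < ((n:ℝ) - 1)/2 := by linarith
  have hp' : (-1:ℝ) < ((n:ℝ) - 2)/2 := by linarith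
  have hq : (-1:ℝ) < -(1/2:ℝ) := by norm_num
  have hint2 : IntervalIntegrable (fun s => s ^ (((n:ℝ) - 1)/2) * (x - s) ^ (-(1/2) : ℝ))
      MeasureTheory.volume 0 x := integrable_rpow_mul hp hq hx0
  have hint3 : IntervalIntegrable (fun s => C * (s ^ (((n:ℝ) - 2)/2) * (x - s) ^ (-(1/2) : ℝ)))
      MeasureTheory.volume 0 x := (integrable_rpow_mul hp' hq hx0).const_mul C
  set g : ℝ → ℝ := fun s => (Nat.card {ℓ : ℕ | μ ℓ < s} : ℝ) * (x - s) ^ (-(1/2) : ℝ)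
      - c * (s ^ (((n:ℝ) - 1)/2) * (x - s) ^ (-(1/2) : ℝ)) with hgdef
  have hg_int : IntervalIntegrable g MeasureTheory.volume 0 x := hint.sub (hint2.const_mul c)
  have hβ1 := main_beta n hn hx0
  have hβ2 := err_beta n hn hx0
  -- difference equals (1/2) ∫ g
  have hgi : ∫ s in (0:ℝ)..x, g s
      = (∫ s in (0:ℝ)..x, (Nat.card {ℓ : ℕ | μ ℓ < s} : ℝ) * (x - s) ^ (-(1/2) : ℝ))
        - c * ∫ s in (0:ℝ)..x, s ^ (((n:ℝ) - 1)/2) * (x - s) ^ (-(1/2) : ℝ) := by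
    rw [hgdef, intervalIntegral.integral_sub hint (hint2.const_mul c),
      intervalIntegral.integral_const_mul]
  have hdiff : (∑' ℓ : ℕ, (max (x - μ ℓ) 0) ^ ((1 : ℝ) / 2))
      - (c / 2) * (Real.Gamma (1 / 2) * Real.Gamma (((n : ℝ) + 1) / 2)
          / Real.Gamma (1 + (n : ℝ) / 2)) * x ^ ((n : ℝ) / 2)
      = (1/2) * ∫ s in (0:ℝ)..x, g s := by
    rw [heq, hgi, hβ1]
    ring
  -- split the integral
  have hsub01 : Set.uIcc (0:ℝ) 1 ⊆ Set.uIcc 0 x := by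
    rw [Set.uIcc_of_le (by norm_num : (0:ℝ) ≤ 1), Set.uIcc_of_le hx0.le]
    exact Set.Icc_subset_Icc le_rfl hx1
  have hsub1x : Set.uIcc (1:ℝ) x ⊆ Set.uIcc 0 x := by
    rw [Set.uIcc_of_le hx1, Set.uIcc_of_le hx0.le]
    exact Set.Icc_subset_Icc (by norm_num) le_rfl
  have hg01 : IntervalIntegrable g MeasureTheory.volume 0 1 := hg_int.mono_set hsub01
  have hg1x : IntervalIntegrable g MeasureTheory.volume 1 x := hg_int.mono_set hsub1x
  have hsplit : ∫ s in (0:ℝ)..x, g s = (∫ s in (0:ℝ)..1, g s) + ∫ s in (1:ℝ)..x, g s :=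
    (intervalIntegral.integral_add_adjacent_intervals hg01 hg1x).symm
  -- pointwise bound on [0,1]
  have hptw1 : ∀ s ∈ Set.Icc (0:ℝ) 1, |g s| ≤ 2*c + C := by
    intro s hs
    have hr0 : (0:ℝ) ≤ (x - s) ^ (-(1/2) : ℝ) := Real.rpow_nonneg (by linarith [hs.2]) _
    have hr1 : (x - s) ^ (-(1/2) : ℝ) ≤ 1 :=
      Real.rpow_le_one_of_one_le_of_nonpos (by linarith [hs.2]) (by norm_num)
    have hsp : s ^ (((n:ℝ) - 1)/2) ≤ 1 := Real.rpow_le_one hs.1 hs.2 (by linarith)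
    have hsp0 : (0:ℝ) ≤ s ^ (((n:ℝ) - 1)/2) := Real.rpow_nonneg hs.1 _
    -- N s ≤ N 1 ≤ c + C
    obtain ⟨ks, hksiff, hkscard⟩ := count_exists μ hmono (hex s)
    obtain ⟨k1, h1iff, h1card⟩ := count_exists μ hmono (hex 1)
    have hksk1 : ks ≤ k1 := by
      by_contra hcon
      push_neg at hcon
      exact lt_irrefl k1 ((h1iff k1).mp (lt_of_lt_of_le ((hksiff k1).mpr hcon) hs.2))
    have hN1 : (k1:ℝ) ≤ c + C := by
      have := hN 1 le_rfl
      rw [h1card, Real.one_rpow, Real.one_rpow, mul_one, mul_one] at this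
      have := abs_le.mp this
      linarith [this.2]
    have hNs : (Nat.card {ℓ : ℕ | μ ℓ < s} : ℝ) ≤ c + C := by
      rw [hkscard]
      exact le_trans (by exact_mod_cast hksk1) hN1
    have hNs0 : (0:ℝ) ≤ (Nat.card {ℓ : ℕ | μ ℓ < s} : ℝ) := Nat.cast_nonneg _
    have hfact : g s = ((Nat.card {ℓ : ℕ | μ ℓ < s} : ℝ) - c * s ^ (((n:ℝ) - 1)/2))
        * (x - s) ^ (-(1/2) : ℝ) := by rw [hgdef]; ring
    rw [hfact, abs_mul, abs_of_nonneg hr0]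
    have habs : |(Nat.card {ℓ : ℕ | μ ℓ < s} : ℝ) - c * s ^ (((n:ℝ) - 1)/2)| ≤ 2*c + C := by
      rw [abs_sub_comm, abs_sub_le_iff]
      constructor
      · nlinarith
      · nlinarith
    calc |(Nat.card {ℓ : ℕ | μ ℓ < s} : ℝ) - c * s ^ (((n:ℝ) - 1)/2)| * (x - s) ^ (-(1/2) : ℝ)
        ≤ (2*c + C) * 1 :=
          mul_le_mul habs hr1 hr0 (by linarith : (0:ℝ) ≤ 2*c + C)
      _ = 2*c + C := by ring
  -- bound on [0,1]
  have hb1 : |∫ s in (0:ℝ)..1, g s| ≤ 2*c + C := by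
    calc |∫ s in (0:ℝ)..1, g s| ≤ ∫ s in (0:ℝ)..1, |g s| :=
          intervalIntegral.abs_integral_le_integral_abs (by norm_num)
      _ ≤ ∫ _ in (0:ℝ)..1, (2*c + C) := by
          apply intervalIntegral.integral_mono_on (by norm_num) hg01.abs
            intervalIntegrable_const hptw1
      _ = 2*c + C := by simp
  -- pointwise bound on [1,x]
  have hptw2 : ∀ s ∈ Set.Icc (1:ℝ) x, |g s| ≤ C * (s ^ (((n:ℝ) - 2)/2) * (x - s) ^ (-(1/2) : ℝ)) := by
    intro s hs
    have hr0 : (0:ℝ) ≤ (x - s) ^ (-(1/2) : ℝ) := Real.rpow_nonneg (by linarith [hs.2]) _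
    have hfact : g s = ((Nat.card {ℓ : ℕ | μ ℓ < s} : ℝ) - c * s ^ (((n:ℝ) - 1)/2))
        * (x - s) ^ (-(1/2) : ℝ) := by rw [hgdef]; ring
    rw [hfact, abs_mul, abs_of_nonneg hr0, ← mul_assoc]
    exact mul_le_mul_of_nonneg_right (hN s hs.1) hr0
  -- bound on [1,x]
  have hb2 : |∫ s in (1:ℝ)..x, g s| ≤ C * B₂ * x ^ (((n:ℝ) - 1)/2) := by
    have hstep : ∫ s in (1:ℝ)..x, |g s|
        ≤ ∫ s in (1:ℝ)..x, C * (s ^ (((n:ℝ) - 2)/2) * (x - s) ^ (-(1/2) : ℝ)) :=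
      intervalIntegral.integral_mono_on hx1 hg1x.abs (hint3.mono_set hsub1x) hptw2
    have hnn : (0:ℝ) ≤ ∫ s in (0:ℝ)..1, C * (s ^ (((n:ℝ) - 2)/2) * (x - s) ^ (-(1/2) : ℝ)) := by
      apply intervalIntegral.integral_nonneg (by norm_num)
      intro u hu
      have h1 : (0:ℝ) ≤ u ^ (((n:ℝ) - 2)/2) := Real.rpow_nonneg hu.1 _
      have h2 : (0:ℝ) ≤ (x - u) ^ (-(1/2) : ℝ) := Real.rpow_nonneg (by linarith [hu.2]) _
      positivity
    have hsplit2 : ∫ s in (0:ℝ)..x, C * (s ^ (((n:ℝ) - 2)/2) * (x - s) ^ (-(1/2) : ℝ))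
        = (∫ s in (0:ℝ)..1, C * (s ^ (((n:ℝ) - 2)/2) * (x - s) ^ (-(1/2) : ℝ)))
          + ∫ s in (1:ℝ)..x, C * (s ^ (((n:ℝ) - 2)/2) * (x - s) ^ (-(1/2) : ℝ)) :=
      (intervalIntegral.integral_add_adjacent_intervals (hint3.mono_set hsub01)
        (hint3.mono_set hsub1x)).symm
    have hval : ∫ s in (0:ℝ)..x, C * (s ^ (((n:ℝ) - 2)/2) * (x - s) ^ (-(1/2) : ℝ))
        = C * (B₂ * x ^ (((n:ℝ) - 1)/2)) := by
      rw [intervalIntegral.integral_const_mul, hβ2]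
    calc |∫ s in (1:ℝ)..x, g s| ≤ ∫ s in (1:ℝ)..x, |g s| :=
          intervalIntegral.abs_integral_le_integral_abs hx1
      _ ≤ ∫ s in (1:ℝ)..x, C * (s ^ (((n:ℝ) - 2)/2) * (x - s) ^ (-(1/2) : ℝ)) := hstep
      _ ≤ ∫ s in (0:ℝ)..x, C * (s ^ (((n:ℝ) - 2)/2) * (x - s) ^ (-(1/2) : ℝ)) := by
          rw [hsplit2]; linarith
      _ = C * B₂ * x ^ (((n:ℝ) - 1)/2) := by rw [hval]; ring
  -- conclude
  have hX : (1:ℝ) ≤ x ^ (((n:ℝ) - 1)/2) := Real.one_le_rpow hx1 (by linarith)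
  rw [hdiff, abs_mul, abs_of_nonneg (by norm_num : (0:ℝ) ≤ (1/2:ℝ)), hsplit]
  have htri : |(∫ s in (0:ℝ)..1, g s) + ∫ s in (1:ℝ)..x, g s|
      ≤ |∫ s in (0:ℝ)..1, g s| + |∫ s in (1:ℝ)..x, g s| := abs_add_le _ _
  have hCB₂X : C * B₂ * x ^ (((n:ℝ) - 1)/2) ≤ C * B₂ * x ^ (((n:ℝ) - 1)/2) := le_rfl
  nlinarith [hX, hb1, hb2, htri, hCB₂X, mul_le_mul_of_nonneg_left hX (by linarith : (0:ℝ) ≤ (2*c + C)/2 + 1)]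
end

section
/- Let n ≥ 2 be a natural number, a > 0 and μ₀ > 0 real numbers. Set α = 2 ln a and T(λ) = (1/2) ln(λ/μ₀). Then there exist C > 0 and λ₁ > 0 such that for all λ ≥ λ₁: |∫_{α}^{T(λ)} (λ − (n−1)²/4)^{n/2} e^{−(n−1)t} dt − λ^{n/2} / ((n−1) a^{2(n−1)})| ≤ C λ^{(n−1)/2}. -/
open MeasureTheory Real

lemma my_rpow_mvt {p x y : ℝ} (hp : 1 ≤ p) (hx : 0 ≤ x) (hxy : x ≤ y) :
    |y ^ p - x ^ p| ≤ p * y ^ (p - 1) * (y - x) := by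
  have hy : 0 ≤ y := hx.trans hxy
  have hder : ∀ z ∈ Set.Icc x y, DifferentiableAt ℝ (fun z : ℝ => z ^ p) z :=
    fun z _ => (Real.hasDerivAt_rpow_const (Or.inr hp)).differentiableAt
  have hbound : ∀ z ∈ Set.Icc x y, ‖deriv (fun z : ℝ => z ^ p) z‖ ≤ p * y ^ (p - 1) := by
    intro z hz
    rw [Real.deriv_rpow_const z p]
    have hz0 : 0 ≤ z := hx.trans hz.1
    have hzp : z ^ (p - 1) ≤ y ^ (p - 1) :=
      Real.rpow_le_rpow hz0 hz.2 (by linarith)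
    have : ‖p * z ^ (p - 1)‖ = p * z ^ (p - 1) := by
      rw [Real.norm_eq_abs, abs_of_nonneg (by positivity)]
    rw [this]
    have hp0 : 0 ≤ p := by linarith
    nlinarith [Real.rpow_nonneg hz0 (p - 1)]
  have key := (convex_Icc x y).norm_image_sub_le_of_norm_deriv_le hder hbound
    (Set.left_mem_Icc.2 hxy) (Set.right_mem_Icc.2 hxy)
  simpa [Real.norm_eq_abs, abs_of_nonneg (sub_nonneg.2 hxy)] using key

lemma my_exp_integral (m α T : ℝ) (hm : m ≠ 0) :
    (∫ t in α..T, Real.exp (-m * t))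
      = (Real.exp (-m * α) - Real.exp (-m * T)) / m := by
  rw [intervalIntegral.integral_comp_mul_left (fun x => Real.exp x)
      (neg_ne_zero.2 hm), integral_exp, smul_eq_mul, inv_neg, neg_mul, ← mul_neg, neg_sub,
    div_eq_inv_mul]

lemma my_abs_sub (x y : ℝ) : |x - y| ≤ |x| + |y| := by
  rw [sub_eq_add_neg]
  exact (abs_add_le _ _).trans (by rw [abs_neg])

/-- Main-term integral estimate for a cusp of exponent `δ = 1`:
with `α = 2 ln a` and `T(λ) = (1/2) ln(λ/μ₀)`,
`|∫_α^{T(λ)} (λ − (n−1)²/4)^{n/2} e^{−(n−1)t} dt − λ^{n/2}/((n−1) a^{2(n−1)})|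
  ≤ C λ^{(n−1)/2}` for all large `λ`. -/
theorem cusp_main_term_integral_delta_one
    (n : ℕ) (hn : 2 ≤ n) (a μ₀ : ℝ) (ha : 0 < a) (hμ₀ : 0 < μ₀) :
    ∃ C > 0, ∃ lam₁ > 0, ∀ lam : ℝ, lam₁ ≤ lam →
      |(∫ t in (2 * Real.log a)..((1 / 2) * Real.log (lam / μ₀)),
          (lam - ((n : ℝ) - 1) ^ 2 / 4) ^ ((n : ℝ) / 2)
            * Real.exp (-((n : ℝ) - 1) * t))
        - lam ^ ((n : ℝ) / 2) / (((n : ℝ) - 1) * a ^ (2 * ((n : ℝ) - 1)))|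
      ≤ C * lam ^ (((n : ℝ) - 1) / 2) := by
  have h2 : (2:ℝ) ≤ (n:ℝ) := by exact_mod_cast hn
  set m : ℝ := (n:ℝ) - 1 with hm
  have hm1 : 1 ≤ m := by simp only [hm]; linarith
  have hm0 : 0 < m := by linarith
  set p : ℝ := (n:ℝ) / 2 with hp
  have hp1 : 1 ≤ p := by simp only [hp]; linarith
  have hpm : p - 1 ≤ m / 2 := by simp only [hp, hm]; linarith
  set c : ℝ := m ^ 2 / 4 with hc
  have hc0 : 0 < c := by positivity
  set A : ℝ := a ^ (2 * m) with hA
  have hA0 : 0 < A := Real.rpow_pos_of_pos ha _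
  refine ⟨p * c / (m * A) + μ₀ ^ (m / 2) / m, by positivity, c + 1, by positivity, ?_⟩
  intro lam hlam
  have hlam1 : (1:ℝ) ≤ lam := by linarith
  have hlam0 : (0:ℝ) < lam := by linarith
  have hlc1 : (1:ℝ) ≤ lam - c := by linarith
  have hlc0 : (0:ℝ) ≤ lam - c := by linarith
  set T : ℝ := 1 / 2 * Real.log (lam / μ₀) with hT
  set α : ℝ := 2 * Real.log a with hα
  -- exponential values at endpoints
  have hexpα : Real.exp (-m * α) = A⁻¹ := by
    rw [hA, hα, Real.rpow_def_of_pos ha, ← Real.exp_neg]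
    ring_nf
  have hexpT : Real.exp (-m * T) = μ₀ ^ (m / 2) * lam ^ (-(m / 2)) := by
    have h1 : lam / μ₀ > 0 := by positivity
    rw [hT, show -m * (1 / 2 * Real.log (lam / μ₀)) = Real.log (lam / μ₀) * (-(m/2)) by ring,
      ← Real.rpow_def_of_pos h1, Real.div_rpow hlam0.le hμ₀.le, Real.rpow_neg hlam0.le,
      Real.rpow_neg hμ₀.le]
    field_simp
  -- compute the integral
  have hint : (∫ t in α..T, (lam - c) ^ p * Real.exp (-m * t))
      = (lam - c) ^ p * ((Real.exp (-m * α) - Real.exp (-m * T)) / m) := by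
    rw [intervalIntegral.integral_const_mul, my_exp_integral m α T hm0.ne']
  rw [hint, hexpα, hexpT]
  have hkey : (lam - c) ^ p * ((A⁻¹ - μ₀ ^ (m / 2) * lam ^ (-(m / 2))) / m) - lam ^ p / (m * A)
      = ((lam - c) ^ p - lam ^ p) / (m * A)
        - (lam - c) ^ p * μ₀ ^ (m / 2) * lam ^ (-(m / 2)) / m := by
    field_simp
    ring
  rw [hkey]
  have hE1 : |((lam - c) ^ p - lam ^ p) / (m * A)| ≤ p * c / (m * A) * lam ^ (m / 2) := by
    rw [abs_div, abs_of_pos (by positivity : (0:ℝ) < m * A)]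
    rw [div_le_iff₀ (by positivity)]
    have h1 : |(lam - c) ^ p - lam ^ p| ≤ p * lam ^ (p - 1) * c := by
      have := my_rpow_mvt hp1 hlc0 (by linarith : lam - c ≤ lam)
      rw [abs_sub_comm] at this
      simpa using this
    have h2 : lam ^ (p - 1) ≤ lam ^ (m / 2) :=
      Real.rpow_le_rpow_of_exponent_le hlam1 hpm
    calc |(lam - c) ^ p - lam ^ p| ≤ p * lam ^ (p - 1) * c := h1
      _ ≤ p * lam ^ (m / 2) * c := by gcongr
      _ = p * c / (m * A) * lam ^ (m / 2) * (m * A) := by field_simp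
  have hE2 : |(lam - c) ^ p * μ₀ ^ (m / 2) * lam ^ (-(m / 2)) / m|
      ≤ μ₀ ^ (m / 2) / m * lam ^ (m / 2) := by
    rw [abs_of_nonneg (by positivity)]
    have h1 : (lam - c) ^ p ≤ lam ^ p := Real.rpow_le_rpow hlc0 (by linarith) (by linarith)
    have h2 : lam ^ p * lam ^ (-(m / 2)) = lam ^ (p - m / 2) := by
      rw [← Real.rpow_add hlam0]; ring_nf
    have h3 : lam ^ (p - m / 2) ≤ lam ^ (m / 2) := by
      apply Real.rpow_le_rpow_of_exponent_le hlam1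
      simp only [hp, hm]; linarith
    have h4 : (0:ℝ) ≤ lam ^ (-(m / 2)) := (Real.rpow_pos_of_pos hlam0 _).le
    have h5 : (lam - c) ^ p * lam ^ (-(m / 2)) ≤ lam ^ (m / 2) := by
      calc (lam - c) ^ p * lam ^ (-(m / 2)) ≤ lam ^ p * lam ^ (-(m / 2)) :=
            mul_le_mul_of_nonneg_right h1 h4
        _ = lam ^ (p - m / 2) := h2
        _ ≤ lam ^ (m / 2) := h3
    have heq : (lam - c) ^ p * μ₀ ^ (m / 2) * lam ^ (-(m / 2)) / m
        = μ₀ ^ (m / 2) / m * ((lam - c) ^ p * lam ^ (-(m / 2))) := by ring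
    rw [heq]
    exact mul_le_mul_of_nonneg_left h5 (by positivity)
  refine (my_abs_sub _ _).trans ?_
  calc |((lam - c) ^ p - lam ^ p) / (m * A)|
        + |(lam - c) ^ p * μ₀ ^ (m / 2) * lam ^ (-(m / 2)) / m|
      ≤ p * c / (m * A) * lam ^ (m / 2) + μ₀ ^ (m / 2) / m * lam ^ (m / 2) := add_le_add hE1 hE2
    _ = (p * c / (m * A) + μ₀ ^ (m / 2) / m) * lam ^ (m / 2) := by ring
end

section
/- Let n ≥ 2 be a natural number and δ a real number with 1/n < δ < 1, and let a > 0, μ₀ > 0. Set κ = (n−1)δ((n−3)δ+2)/(4(1−δ)²), α = a^{2(1−δ)}/(1−δ) and T(λ) = (1/(1−δ))·(λ/μ₀)^{(1−δ)/(2δ)}. Then there exist C > 0 and λ₁ > 0 such that for all λ ≥ λ₁: |∫_{α}^{T(λ)} (λ − κ t^{−2})^{n/2} · ((1−δ)t)^{−δ(n−1)/(1−δ)} dt − λ^{n/2} / ((δn−1) a^{2(δn−1)})| ≤ C (λ^{(n−1)/2} + λ^{1/(2δ)}). -/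
open MeasureTheory Real

lemma cusp_aux_bernoulli {s x lam : ℝ} (hx : 0 ≤ x) (hxl : x ≤ lam) (hs : 1 ≤ s) :
    lam ^ s - x ^ s ≤ s * lam ^ (s - 1) * (lam - x) := by
  rcases eq_or_lt_of_le (hx.trans hxl) with h | hlam
  · have hx0 : x = 0 := le_antisymm (h ▸ hxl) hx
    simp [← h, hx0]
  · have hu : -1 ≤ x / lam - 1 := by
      have : 0 ≤ x / lam := div_nonneg hx hlam.le
      linarith
    have hb := one_add_mul_self_le_rpow_one_add hu hs
    rw [add_sub_cancel] at hb
    rw [Real.div_rpow hx hlam.le] at hb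
    have hls : (0:ℝ) < lam ^ s := Real.rpow_pos_of_pos hlam s
    have h1 := mul_le_mul_of_nonneg_left hb hls.le
    have h2 : lam ^ s * (x ^ s / lam ^ s) = x ^ s := by field_simp
    rw [h2] at h1
    have hkey : lam ^ s - x ^ s ≤ lam ^ s * (s * (1 - x / lam)) := by nlinarith [h1]
    calc lam ^ s - x ^ s ≤ lam ^ s * (s * (1 - x / lam)) := hkey
      _ = s * (lam ^ s / lam) * (lam - x) := by field_simp
      _ = s * lam ^ (s - 1) * (lam - x) := by
          rw [Real.rpow_sub hlam, Real.rpow_one]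

set_option maxHeartbeats 1000000 in
/-- Main-term integral estimate for a cusp of exponent `1/n < δ < 1`:
with `κ = (n−1)δ((n−3)δ+2)/(4(1−δ)²)`, `α = a^{2(1−δ)}/(1−δ)` and
`T(λ) = (1/(1−δ))(λ/μ₀)^{(1−δ)/(2δ)}`,
`|∫_α^{T(λ)} (λ − κ t^{−2})^{n/2} ((1−δ)t)^{−δ(n−1)/(1−δ)} dt
   − λ^{n/2}/((δn−1) a^{2(δn−1)})| ≤ C (λ^{(n−1)/2} + λ^{1/(2δ)})` for all large `λ`. -/
theorem cusp_main_term_integral_delta_lt_one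
    (n : ℕ) (hn : 2 ≤ n) (δ : ℝ) (hδ₁ : 1 / (n : ℝ) < δ) (hδ₂ : δ < 1)
    (a μ₀ : ℝ) (ha : 0 < a) (hμ₀ : 0 < μ₀) :
    ∃ C > 0, ∃ lam₁ > 0, ∀ lam : ℝ, lam₁ ≤ lam →
      |(∫ t in (a ^ (2 * (1 - δ)) / (1 - δ))..
            ((1 / (1 - δ)) * (lam / μ₀) ^ ((1 - δ) / (2 * δ))),
          (lam - ((n : ℝ) - 1) * δ * (((n : ℝ) - 3) * δ + 2) / (4 * (1 - δ) ^ 2)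
              * t ^ (-(2 : ℝ))) ^ ((n : ℝ) / 2)
            * ((1 - δ) * t) ^ (-δ * ((n : ℝ) - 1) / (1 - δ)))
        - lam ^ ((n : ℝ) / 2) / ((δ * (n : ℝ) - 1) * a ^ (2 * (δ * (n : ℝ) - 1)))|
      ≤ C * (lam ^ (((n : ℝ) - 1) / 2) + lam ^ (1 / (2 * δ))) := by
  -- basic positivity facts
  have hn2 : (2:ℝ) ≤ (n:ℝ) := by exact_mod_cast hn
  have hnpos : (0:ℝ) < n := by linarith
  have hδ0 : 0 < δ := lt_trans (by positivity) hδ₁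
  have h1δ : 0 < 1 - δ := by linarith
  have hδn : 1 < δ * n := by
    rw [div_lt_iff₀ hnpos] at hδ₁; linarith
  set κ : ℝ := ((n:ℝ) - 1) * δ * (((n:ℝ) - 3) * δ + 2) / (4 * (1 - δ) ^ 2) with hκdef
  have hκ : 0 ≤ κ := by
    apply div_nonneg _ (by positivity)
    have h1 : (0:ℝ) ≤ ((n:ℝ) - 1) * δ := by nlinarith
    have h2 : (0:ℝ) ≤ ((n:ℝ) - 3) * δ + 2 := by nlinarith
    positivity
  set A : ℝ := a ^ (2 * (1 - δ)) with hAdef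
  have hA : 0 < A := Real.rpow_pos_of_pos ha _
  set α : ℝ := A / (1 - δ) with hαdef
  have hα : 0 < α := by positivity
  set s : ℝ := (n:ℝ) / 2 with hsdef
  have hs1 : 1 ≤ s := by rw [hsdef]; linarith
  set q : ℝ := -δ * ((n:ℝ) - 1) / (1 - δ) with hqdef
  have hq1 : q + 1 = (1 - δ * n) / (1 - δ) := by rw [hqdef]; field_simp; ring
  have hq1neg : q + 1 < 0 := by
    rw [hq1]; apply div_neg_of_neg_of_pos (by linarith) h1δ
  set e : ℝ := (1 - δ) / (2 * δ) with hedef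
  have he : 0 < e := by positivity
  -- constants
  set X : ℝ := a ^ (2 * (δ * (n:ℝ) - 1)) with hXdef
  have hX : 0 < X := Real.rpow_pos_of_pos ha _
  set c₂ : ℝ := s * κ * (1 - δ) ^ q * (α ^ (q - 1) / (-(q+1))) with hc2def
  have hc₂ : 0 ≤ c₂ := by
    apply mul_nonneg (mul_nonneg (mul_nonneg (by positivity) hκ) (Real.rpow_pos_of_pos h1δ q).le)
    apply div_nonneg (Real.rpow_pos_of_pos hα _).le (by linarith)
  set c₃ : ℝ := μ₀ ^ ((δ * (n:ℝ) - 1) / (2 * δ)) / (δ * (n:ℝ) - 1) with hc3def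
  have hc₃ : 0 < c₃ := by
    apply div_pos (Real.rpow_pos_of_pos hμ₀ _) (by linarith)
  refine ⟨c₂ + c₃ + 1, by positivity, max (max 1 (κ / α ^ 2)) (μ₀ * a ^ (4 * δ)), ?_, ?_⟩
  · apply lt_of_lt_of_le one_pos ((le_max_left _ _).trans (le_max_left _ _))
  intro lam hlam
  have hlam1 : 1 ≤ lam := le_trans ((le_max_left _ _).trans (le_max_left _ _)) hlam
  have hlam0 : 0 < lam := lt_of_lt_of_le one_pos hlam1
  have hlamκ : κ / α ^ 2 ≤ lam := le_trans ((le_max_right _ _).trans (le_max_left _ _)) hlam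
  have hlamμ : μ₀ * a ^ (4 * δ) ≤ lam := le_trans (le_max_right _ _) hlam
  set T : ℝ := (1 / (1 - δ)) * (lam / μ₀) ^ e with hTdef
  have hαT : α ≤ T := by
    have h1 : a ^ (4 * δ) ≤ lam / μ₀ := (le_div_iff₀ hμ₀).2 (by linarith [hlamμ])
    have h2 : A ≤ (lam / μ₀) ^ e := by
      have h3 : (a ^ (4 * δ)) ^ e ≤ (lam / μ₀) ^ e :=
        Real.rpow_le_rpow (by positivity) h1 he.le
      have h4 : (a ^ (4 * δ)) ^ e = A := by
        rw [← Real.rpow_mul ha.le, hAdef]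
        congr 1
        rw [hedef]; field_simp; ring
      linarith [h3, h4.symm.le]
    rw [hαdef, hTdef, div_eq_mul_one_div, mul_comm A (1 / (1-δ))]
    exact mul_le_mul_of_nonneg_left h2 (by positivity)
  have hT0 : 0 < T := lt_of_lt_of_le hα hαT
  have huIcc : Set.uIcc α T = Set.Icc α T := Set.uIcc_of_le hαT
  have h0uIcc : (0:ℝ) ∉ Set.uIcc α T := by
    rw [huIcc]; intro h; exact absurd h.1 (not_le.2 hα)
  -- the functions
  set f : ℝ → ℝ := fun t => (lam - κ * t ^ (-(2:ℝ))) ^ s * ((1 - δ) * t) ^ q with hfdef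
  set g : ℝ → ℝ := fun t => lam ^ s * (1 - δ) ^ q * t ^ q with hgdef
  set cst : ℝ := s * lam ^ (s - 1) * κ * (1 - δ) ^ q with hcstdef
  have hcst : 0 ≤ cst := by
    apply mul_nonneg (mul_nonneg (mul_nonneg (by positivity) (by positivity)) hκ)
    exact (Real.rpow_pos_of_pos h1δ q).le
  set b : ℝ → ℝ := fun t => cst * t ^ (-(2:ℝ) + q) with hbdef
  -- pointwise facts on [α, T]
  have hxpt : ∀ t ∈ Set.Icc α T, 0 ≤ κ * t ^ (-(2:ℝ)) ∧ κ * t ^ (-(2:ℝ)) ≤ lam := by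
    intro t ht
    have ht0 : 0 < t := lt_of_lt_of_le hα ht.1
    constructor
    · exact mul_nonneg hκ (Real.rpow_pos_of_pos ht0 _).le
    · have h1 : t ^ (-(2:ℝ)) = (t ^ 2)⁻¹ := by
        rw [Real.rpow_neg ht0.le, ← Real.rpow_natCast t 2]; norm_num
      have h2 : (t ^ 2)⁻¹ ≤ (α ^ 2)⁻¹ := by
        apply inv_anti₀ (by positivity)
        exact pow_le_pow_left₀ hα.le ht.1 2
      calc κ * t ^ (-(2:ℝ)) = κ * (t^2)⁻¹ := by rw [h1]
        _ ≤ κ * (α^2)⁻¹ := mul_le_mul_of_nonneg_left h2 hκ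
        _ = κ / α ^ 2 := by rw [div_eq_mul_inv]
        _ ≤ lam := hlamκ
  have hfg : ∀ t ∈ Set.uIcc α T, |f t - g t| ≤ b t := by
    rw [huIcc]
    intro t ht
    have ht0 : 0 < t := lt_of_lt_of_le hα ht.1
    obtain ⟨hx0, hxlam⟩ := hxpt t ht
    set x : ℝ := lam - κ * t ^ (-(2:ℝ)) with hxdef
    have hx0' : 0 ≤ x := by rw [hxdef]; linarith
    have hxle : x ≤ lam := by rw [hxdef]; linarith
    have hmul : ((1 - δ) * t) ^ q = (1 - δ) ^ q * t ^ q :=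
      Real.mul_rpow h1δ.le ht0.le
    have hfg1 : f t - g t = (x ^ s - lam ^ s) * ((1 - δ) ^ q * t ^ q) := by
      rw [hfdef, hgdef]; simp only []; rw [hmul]; ring
    have hxs : x ^ s ≤ lam ^ s := Real.rpow_le_rpow hx0' hxle (by linarith)
    have habs : |f t - g t| = (lam ^ s - x ^ s) * ((1 - δ) ^ q * t ^ q) := by
      rw [hfg1, abs_mul, abs_of_nonpos (by linarith), abs_of_nonneg
        (mul_nonneg (Real.rpow_pos_of_pos h1δ q).le (Real.rpow_pos_of_pos ht0 q).le)]
      ring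
    rw [habs]
    have hbern := cusp_aux_bernoulli hx0' hxle hs1
    have hsub : lam - x = κ * t ^ (-(2:ℝ)) := by rw [hxdef]; ring
    rw [hsub] at hbern
    calc (lam ^ s - x ^ s) * ((1 - δ) ^ q * t ^ q)
        ≤ (s * lam ^ (s-1) * (κ * t ^ (-(2:ℝ)))) * ((1 - δ) ^ q * t ^ q) := by
          apply mul_le_mul_of_nonneg_right hbern
          exact mul_nonneg (Real.rpow_pos_of_pos h1δ q).le (Real.rpow_pos_of_pos ht0 q).le
      _ = cst * (t ^ (-(2:ℝ)) * t ^ q) := by rw [hcstdef]; ring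
      _ = b t := by
          rw [hbdef]; simp only []; rw [Real.rpow_add ht0]
  -- integrability
  have hcont_f : ContinuousOn f (Set.uIcc α T) := by
    rw [huIcc]
    apply ContinuousOn.mul
    · apply ContinuousOn.rpow_const
      · apply ContinuousOn.sub continuousOn_const
        apply ContinuousOn.mul continuousOn_const
        apply ContinuousOn.rpow_const continuousOn_id
        intro t ht; exact Or.inl (ne_of_gt (lt_of_lt_of_le hα ht.1))
      · intro t ht; right; positivity
    · apply ContinuousOn.rpow_const
      · exact (continuousOn_const.mul continuousOn_id)
      · intro t ht; left
        have : 0 < t := lt_of_lt_of_le hα ht.1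
        positivity
  have hcont_g : ContinuousOn g (Set.uIcc α T) := by
    rw [huIcc]
    apply ContinuousOn.mul continuousOn_const
    apply ContinuousOn.rpow_const continuousOn_id
    intro t ht; exact Or.inl (ne_of_gt (lt_of_lt_of_le hα ht.1))
  have hcont_b : ContinuousOn b (Set.uIcc α T) := by
    rw [huIcc]
    apply ContinuousOn.mul continuousOn_const
    apply ContinuousOn.rpow_const continuousOn_id
    intro t ht; exact Or.inl (ne_of_gt (lt_of_lt_of_le hα ht.1))
  have hint_f : IntervalIntegrable f volume α T := hcont_f.intervalIntegrable
  have hint_g : IntervalIntegrable g volume α T := hcont_g.intervalIntegrable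
  have hint_b : IntervalIntegrable b volume α T := hcont_b.intervalIntegrable
  -- error 1 : |∫ (f - g)| ≤ c₂ * lam ^ (s - 1)
  have herr1 : |∫ t in α..T, (f t - g t)| ≤ c₂ * lam ^ (s - 1) := by
    have hae : ∀ᵐ t ∂(volume.restrict (Set.uIoc α T)), ‖f t - g t‖ ≤ b t := by
      apply ae_restrict_of_forall_mem measurableSet_uIoc
      intro t ht
      rw [Real.norm_eq_abs]
      exact hfg t (Set.uIoc_subset_uIcc ht)
    have h1 : ‖∫ t in α..T, (f t - g t)‖ ≤ |∫ t in α..T, b t| :=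
      intervalIntegral.norm_integral_le_abs_of_norm_le hae hint_b
    have hrne : (-(2:ℝ) + q) ≠ -1 := by intro h; linarith
    have hbint : (∫ t in α..T, b t)
        = cst * ((T ^ (-(2:ℝ) + q + 1) - α ^ (-(2:ℝ) + q + 1)) / (-(2:ℝ) + q + 1)) := by
      rw [hbdef]
      rw [intervalIntegral.integral_const_mul, integral_rpow (Or.inr ⟨hrne, h0uIcc⟩)]
    have hq2 : (-(2:ℝ) + q + 1) = q - 1 := by ring
    rw [hq2] at hbint
    have hTle : T ^ (q - 1) ≤ α ^ (q - 1) :=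
      Real.rpow_le_rpow_of_nonpos hα hαT (by linarith)
    have hTpos : (0:ℝ) < T ^ (q - 1) := Real.rpow_pos_of_pos hT0 _
    have hveq : (T ^ (q-1) - α ^ (q-1)) / (q - 1) = (α ^ (q-1) - T ^ (q-1)) / (1 - q) := by
      rw [div_eq_div_iff (by linarith) (by linarith)]; ring
    have hv0 : 0 ≤ (T ^ (q-1) - α ^ (q-1)) / (q - 1) := by
      rw [hveq]; exact div_nonneg (by linarith) (by linarith)
    have hv1 : (T ^ (q-1) - α ^ (q-1)) / (q - 1) ≤ α ^ (q-1) / (-(q+1)) := by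
      rw [hveq]
      calc (α ^ (q-1) - T ^ (q-1)) / (1 - q) ≤ α ^ (q-1) / (1 - q) :=
            (div_le_div_iff_of_pos_right (by linarith)).2 (by linarith)
        _ ≤ α ^ (q-1) / (-(q+1)) :=
            div_le_div_of_nonneg_left (Real.rpow_pos_of_pos hα _).le (by linarith) (by linarith)
    have h2 : |∫ t in α..T, b t| ≤ c₂ * lam ^ (s - 1) := by
      rw [hbint, abs_of_nonneg (mul_nonneg hcst hv0)]
      calc cst * ((T ^ (q-1) - α ^ (q-1)) / (q - 1)) ≤ cst * (α ^ (q-1) / (-(q+1))) :=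
            mul_le_mul_of_nonneg_left hv1 hcst
        _ = c₂ * lam ^ (s - 1) := by rw [hc2def, hcstdef]; ring
    rw [← Real.norm_eq_abs]
    exact h1.trans h2
  -- value of ∫ g and main term
  have hgval : (∫ t in α..T, g t)
      = lam ^ s * (1 - δ) ^ q * ((T ^ (q+1) - α ^ (q+1)) / (q+1)) := by
    have hqne : q ≠ -1 := by intro h; rw [h] at hq1neg; linarith
    rw [hgdef]
    rw [show (fun t => lam ^ s * (1 - δ) ^ q * t ^ q) = (fun t => (lam ^ s * (1 - δ) ^ q) * t ^ q) by rfl]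
    rw [intervalIntegral.integral_const_mul, integral_rpow (Or.inr ⟨hqne, h0uIcc⟩)]
  have hM : lam ^ s * (1 - δ) ^ q * (-α ^ (q+1) / (q+1))
      = lam ^ s / ((δ * (n:ℝ) - 1) * X) := by
    have hαq : α ^ (q+1) = A ^ (q+1) / (1-δ) ^ (q+1) := by
      rw [hαdef, Real.div_rpow hA.le h1δ.le]
    have hAq : A ^ (q+1) = X⁻¹ := by
      rw [hAdef, ← Real.rpow_mul ha.le, hXdef, ← Real.rpow_neg ha.le]
      congr 1
      rw [hqdef]; field_simp; ring
    have hsplit2 : (1-δ) ^ (q+1) = (1-δ) ^ q * (1-δ) := by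
      rw [Real.rpow_add h1δ, Real.rpow_one]
    have hP : (0:ℝ) < (1-δ) ^ q := Real.rpow_pos_of_pos h1δ _
    rw [hαq, hAq, hsplit2, hq1]
    have hδn1 : δ * (n:ℝ) - 1 ≠ 0 := by linarith
    have h1δn : 1 - δ * (n:ℝ) ≠ 0 := by linarith
    field_simp
    ring
  have herr2 : |lam ^ s * (1 - δ) ^ q * (T ^ (q+1) / (q+1))| = c₃ * lam ^ (1 / (2 * δ)) := by
    have hE : e * (q+1) = (1 - δ * (n:ℝ)) / (2*δ) := by
      rw [hedef, hq1]; field_simp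
    have hT1 : T ^ (q+1) = ((1-δ) ^ (q+1))⁻¹
        * (lam ^ ((1 - δ * (n:ℝ)) / (2*δ)) / μ₀ ^ ((1 - δ * (n:ℝ)) / (2*δ))) := by
      rw [hTdef, Real.mul_rpow (by positivity) (by positivity),
        Real.div_rpow one_pos.le h1δ.le, Real.one_rpow,
        ← Real.rpow_mul (by positivity : (0:ℝ) ≤ lam / μ₀), hE,
        Real.div_rpow hlam0.le hμ₀.le, one_div]
    have hμinv : μ₀ ^ ((1 - δ * (n:ℝ)) / (2*δ)) = (μ₀ ^ ((δ * (n:ℝ) - 1) / (2*δ)))⁻¹ := by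
      rw [show (1 - δ * (n:ℝ)) / (2*δ) = -((δ * (n:ℝ) - 1) / (2*δ)) by ring,
        Real.rpow_neg hμ₀.le]
    have hlams : lam ^ s * lam ^ ((1 - δ * (n:ℝ)) / (2*δ)) = lam ^ (1 / (2*δ)) := by
      rw [← Real.rpow_add hlam0]
      congr 1
      rw [hsdef]; field_simp; ring
    have hsplit2 : (1-δ) ^ (q+1) = (1-δ) ^ q * (1-δ) := by
      rw [Real.rpow_add h1δ, Real.rpow_one]
    have hP : (0:ℝ) < (1-δ) ^ q := Real.rpow_pos_of_pos h1δ _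
    have hTq : (0:ℝ) < T ^ (q+1) := Real.rpow_pos_of_pos hT0 _
    have hneg : lam ^ s * (1 - δ) ^ q * (T ^ (q+1) / (q+1)) ≤ 0 := by
      apply mul_nonpos_of_nonneg_of_nonpos (by positivity)
      exact div_nonpos_of_nonneg_of_nonpos hTq.le (by linarith)
    rw [abs_of_nonpos hneg, hT1, hμinv, hsplit2, hq1, hc3def]
    have hμpos : (0:ℝ) < μ₀ ^ ((δ * (n:ℝ) - 1) / (2*δ)) := Real.rpow_pos_of_pos hμ₀ _
    have hδn1 : δ * (n:ℝ) - 1 ≠ 0 := by linarith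
    have h1δn : 1 - δ * (n:ℝ) ≠ 0 := by linarith
    rw [← hlams]
    field_simp
    ring
  -- assemble
  have hsplit : (∫ t in α..T, f t) = (∫ t in α..T, (f t - g t)) + ∫ t in α..T, g t := by
    rw [intervalIntegral.integral_sub hint_f hint_g]; ring
  have hkey : (∫ t in α..T, f t) - lam ^ s / ((δ * (n:ℝ) - 1) * X)
      = (∫ t in α..T, (f t - g t)) + lam ^ s * (1 - δ) ^ q * (T ^ (q+1) / (q+1)) := by
    rw [hsplit, hgval, ← hM]; ring
  calc |(∫ t in α..T, f t) - lam ^ s / ((δ * (n:ℝ) - 1) * X)|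
      ≤ |∫ t in α..T, (f t - g t)| + |lam ^ s * (1 - δ) ^ q * (T ^ (q+1) / (q+1))| := by
        rw [hkey]; exact abs_add_le _ _
    _ ≤ c₂ * lam ^ (s - 1) + c₃ * lam ^ (1 / (2 * δ)) := by
        rw [herr2]; exact add_le_add_left herr1 _
    _ ≤ (c₂ + c₃ + 1) * (lam ^ (((n:ℝ) - 1) / 2) + lam ^ (1 / (2 * δ))) := by
        have h1 : lam ^ (s - 1) ≤ lam ^ (((n:ℝ) - 1) / 2) := by
          apply Real.rpow_le_rpow_of_exponent_le hlam1
          rw [hsdef]; linarith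
        have h2 : (0:ℝ) < lam ^ (((n:ℝ) - 1) / 2) := Real.rpow_pos_of_pos hlam0 _
        have h3 : (0:ℝ) < lam ^ (1 / (2 * δ)) := Real.rpow_pos_of_pos hlam0 _
        calc c₂ * lam ^ (s - 1) + c₃ * lam ^ (1 / (2 * δ))
            ≤ c₂ * lam ^ (((n:ℝ) - 1) / 2) + c₃ * lam ^ (1 / (2 * δ)) :=
              add_le_add_left (mul_le_mul_of_nonneg_left h1 hc₂) _
          _ ≤ (c₂ + c₃ + 1) * lam ^ (((n:ℝ) - 1) / 2)
              + (c₂ + c₃ + 1) * lam ^ (1 / (2 * δ)) :=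
              add_le_add (mul_le_mul_of_nonneg_right (by linarith) h2.le)
                (mul_le_mul_of_nonneg_right (by linarith) h3.le)
          _ = (c₂ + c₃ + 1) * (lam ^ (((n:ℝ) - 1) / 2) + lam ^ (1 / (2 * δ))) := by ring
end

section
/- Let n ≥ 2 be a natural number and δ a real number with 1/n < δ < 1, and let a > 0, μ₀ > 0. Set κ = (n−1)δ((n−3)δ+2)/(4(1−δ)²), α = a^{2(1−δ)}/(1−δ) and T(λ) = (1/(1−δ))·(λ/μ₀)^{(1−δ)/(2δ)}. Then there exist C > 0 and λ₁ > 0 such that for all λ ≥ λ₁: ∫_{α}^{T(λ)} ((λ − κ t^{−2})₊)^{(n−1)/2} · ((1−δ)t)^{−δ(n−2)/(1−δ)} dt is at most C λ^{(n−1)/2} if δ > 1/(n−1), at most C λ^{(n−1)/2} ln λ if δ = 1/(n−1), and at most C λ^{1/(2δ)} if δ < 1/(n−1). -/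
open MeasureTheory Real

set_option maxHeartbeats 1000000

/-- Remainder integral estimate for a cusp of exponent `1/n < δ < 1`:
with `κ = (n−1)δ((n−3)δ+2)/(4(1−δ)²)`, `α = a^{2(1−δ)}/(1−δ)` and
`T(λ) = (1/(1−δ))(λ/μ₀)^{(1−δ)/(2δ)}`, the integral
`∫_α^{T(λ)} ((λ − κ t^{−2})₊)^{(n−1)/2} ((1−δ)t)^{−δ(n−2)/(1−δ)} dt` is at most
`C λ^{(n−1)/2}` if `δ > 1/(n−1)`, `C λ^{(n−1)/2} ln λ` if `δ = 1/(n−1)`,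
and `C λ^{1/(2δ)}` if `δ < 1/(n−1)`, for all large `λ`. -/
theorem cusp_remainder_integral_delta_lt_one
    (n : ℕ) (hn : 2 ≤ n) (δ : ℝ) (hδ₁ : 1 / (n : ℝ) < δ) (hδ₂ : δ < 1)
    (a μ₀ : ℝ) (ha : 0 < a) (hμ₀ : 0 < μ₀) :
    ∃ C > 0, ∃ lam₁ > 0, ∀ lam : ℝ, lam₁ ≤ lam →
      (1 / ((n : ℝ) - 1) < δ →
        (∫ t in (a ^ (2 * (1 - δ)) / (1 - δ))..
              ((1 / (1 - δ)) * (lam / μ₀) ^ ((1 - δ) / (2 * δ))),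
            (max (lam - ((n : ℝ) - 1) * δ * (((n : ℝ) - 3) * δ + 2)
                / (4 * (1 - δ) ^ 2) * t ^ (-(2 : ℝ))) 0) ^ (((n : ℝ) - 1) / 2)
              * ((1 - δ) * t) ^ (-δ * ((n : ℝ) - 2) / (1 - δ)))
          ≤ C * lam ^ (((n : ℝ) - 1) / 2)) ∧
      (δ = 1 / ((n : ℝ) - 1) →
        (∫ t in (a ^ (2 * (1 - δ)) / (1 - δ))..
              ((1 / (1 - δ)) * (lam / μ₀) ^ ((1 - δ) / (2 * δ))),
            (max (lam - ((n : ℝ) - 1) * δ * (((n : ℝ) - 3) * δ + 2)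
                / (4 * (1 - δ) ^ 2) * t ^ (-(2 : ℝ))) 0) ^ (((n : ℝ) - 1) / 2)
              * ((1 - δ) * t) ^ (-δ * ((n : ℝ) - 2) / (1 - δ)))
          ≤ C * lam ^ (((n : ℝ) - 1) / 2) * Real.log lam) ∧
      (δ < 1 / ((n : ℝ) - 1) →
        (∫ t in (a ^ (2 * (1 - δ)) / (1 - δ))..
              ((1 / (1 - δ)) * (lam / μ₀) ^ ((1 - δ) / (2 * δ))),
            (max (lam - ((n : ℝ) - 1) * δ * (((n : ℝ) - 3) * δ + 2)
                / (4 * (1 - δ) ^ 2) * t ^ (-(2 : ℝ))) 0) ^ (((n : ℝ) - 1) / 2)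
              * ((1 - δ) * t) ^ (-δ * ((n : ℝ) - 2) / (1 - δ)))
          ≤ C * lam ^ (1 / (2 * δ))) := by
  have hn2 : (2:ℝ) ≤ (n:ℝ) := by exact_mod_cast hn
  have hn0 : (0:ℝ) < n := by linarith
  have hδ0 : 0 < δ := lt_trans (one_div_pos.mpr hn0) hδ₁
  have h1δ : 0 < 1 - δ := by linarith
  set κ : ℝ := ((n:ℝ) - 1) * δ * (((n:ℝ) - 3) * δ + 2) / (4 * (1 - δ) ^ 2) with hκdef
  have hκ0 : 0 ≤ κ := by
    apply div_nonneg _ (by positivity)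
    have h1 : 0 ≤ ((n:ℝ) - 3) * δ + 2 := by
      have h2 : ((n:ℝ) - 3) * δ + 2 = ((n:ℝ) - 2) * δ + (2 - δ) := by ring
      have h3 : 0 ≤ ((n:ℝ) - 2) * δ := mul_nonneg (by linarith) hδ0.le
      linarith
    exact mul_nonneg (mul_nonneg (by linarith) hδ0.le) h1
  set α : ℝ := a ^ (2 * (1 - δ)) / (1 - δ) with hαdef
  have hα0 : 0 < α := div_pos (Real.rpow_pos_of_pos ha _) h1δ
  set q : ℝ := -δ * ((n:ℝ) - 2) / (1 - δ) with hqdef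
  set e : ℝ := ((n:ℝ) - 1) / 2 with hedef
  have he0 : 0 < e := div_pos (by linarith) two_pos
  set s : ℝ := (1 - δ) / (2 * δ) with hsdef
  have hs0 : 0 < s := div_pos h1δ (by linarith)
  have hq1 : q + 1 = (1 - δ * ((n:ℝ) - 1)) / (1 - δ) := by
    rw [hqdef]; field_simp; ring
  have hsum : e + s * (q + 1) = 1 / (2 * δ) := by
    rw [hq1, hedef, hsdef]; field_simp; ring
  set M : ℝ := max 1 ((1 - δ) * α) with hM
  have hM1 : (1:ℝ) ≤ M := le_max_left _ _
  set lam₁ : ℝ := max (Real.exp 1) (μ₀ * M ^ (1/s)) with hl1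
  have hlam₁pos : 0 < lam₁ := lt_of_lt_of_le (Real.exp_pos 1) (le_max_left _ _)
  set c₀ : ℝ := Real.log (1/(1-δ)) - s * Real.log μ₀ - Real.log α with hc0
  set C1 : ℝ := (1-δ) ^ q * (α ^ (q+1) / (-(q+1))) with hC1
  set C2 : ℝ := (1-δ) ^ q * (s + |c₀|) with hC2
  set C3 : ℝ := (1-δ) ^ q * ((1/(1-δ)) ^ (q+1)) / μ₀ ^ (s*(q+1)) / (q+1) with hC3
  set C : ℝ := 1 + |C1| + |C2| + |C3| with hCdef
  have hCpos : 0 < C := by positivity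
  refine ⟨C, hCpos, lam₁, hlam₁pos, fun lam hlam => ?_⟩
  have hlam_exp : Real.exp 1 ≤ lam := le_trans (le_max_left _ _) hlam
  have hlam0 : 0 < lam := lt_of_lt_of_le (Real.exp_pos 1) hlam_exp
  have hloglam : 1 ≤ Real.log lam := (Real.le_log_iff_exp_le hlam0).mpr hlam_exp
  set T : ℝ := (1/(1-δ)) * (lam/μ₀) ^ s with hTdef
  have hlamμ : 0 < lam / μ₀ := div_pos hlam0 hμ₀
  have hT0 : 0 < T := mul_pos (by positivity) (Real.rpow_pos_of_pos hlamμ _)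
  have hαT : α ≤ T := by
    have h1 : μ₀ * M ^ (1/s) ≤ lam := le_trans (le_max_right _ _) hlam
    have h2 : M ^ (1/s) ≤ lam / μ₀ := (le_div_iff₀ hμ₀).mpr (by linarith [h1])
    have h3 : (M ^ (1/s)) ^ s ≤ (lam/μ₀) ^ s :=
      Real.rpow_le_rpow (Real.rpow_nonneg (by linarith) _) h2 hs0.le
    have h4 : (M ^ (1/s)) ^ s = M := by
      rw [← Real.rpow_mul (by linarith : (0:ℝ) ≤ M), one_div,
        inv_mul_cancel₀ hs0.ne', Real.rpow_one]
    have h5 : (1-δ) * α ≤ (lam/μ₀) ^ s := le_trans (le_max_right _ _) (h4 ▸ h3)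
    calc α = (1/(1-δ)) * ((1-δ) * α) := by field_simp
      _ ≤ T := by rw [hTdef]; exact mul_le_mul_of_nonneg_left h5 (by positivity)
  have hIcc : ∀ t ∈ Set.uIcc α T, 0 < t := by
    intro t ht
    rw [Set.uIcc_of_le hαT] at ht
    exact lt_of_lt_of_le hα0 ht.1
  -- integrability of the integrand
  have hfint : IntervalIntegrable
      (fun t => (max (lam - κ * t ^ (-(2:ℝ))) 0) ^ e * ((1-δ) * t) ^ q) volume α T := by
    apply ContinuousOn.intervalIntegrable
    apply ContinuousOn.mul
    · apply ContinuousOn.rpow_const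
      · exact (continuousOn_const.sub (continuousOn_const.mul
          (continuousOn_id.rpow_const (fun t ht => Or.inl (hIcc t ht).ne')))).sup
          continuousOn_const
      · intro t _; exact Or.inr he0.le
    · apply ContinuousOn.rpow_const (continuousOn_const.mul continuousOn_id)
      intro t ht; exact Or.inl (mul_pos h1δ (hIcc t ht)).ne'
  have hgint : IntervalIntegrable (fun t => lam ^ e * ((1-δ) * t) ^ q) volume α T := by
    apply ContinuousOn.intervalIntegrable
    apply ContinuousOn.mul continuousOn_const
    apply ContinuousOn.rpow_const (continuousOn_const.mul continuousOn_id)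
    intro t ht; exact Or.inl (mul_pos h1δ (hIcc t ht)).ne'
  have hfg : ∀ t ∈ Set.Icc α T,
      (max (lam - κ * t ^ (-(2:ℝ))) 0) ^ e * ((1-δ) * t) ^ q
        ≤ lam ^ e * ((1-δ) * t) ^ q := by
    intro t ht
    have ht0 : 0 < t := lt_of_lt_of_le hα0 ht.1
    have h1 : max (lam - κ * t ^ (-(2:ℝ))) 0 ≤ lam := by
      apply max_le _ hlam0.le
      have : 0 ≤ κ * t ^ (-(2:ℝ)) := mul_nonneg hκ0 (Real.rpow_nonneg ht0.le _)
      linarith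
    have h2 := Real.rpow_le_rpow (le_max_right _ _) h1 he0.le
    exact mul_le_mul_of_nonneg_right h2 (Real.rpow_nonneg (by positivity) _)
  have hJ : (∫ t in α..T, (max (lam - κ * t ^ (-(2:ℝ))) 0) ^ e * ((1-δ) * t) ^ q)
      ≤ lam ^ e * ((1-δ) ^ q * ∫ t in α..T, t ^ q) := by
    have h1 := intervalIntegral.integral_mono_on hαT hfint hgint hfg
    have h2 : (∫ t in α..T, lam ^ e * ((1-δ) * t) ^ q)
        = lam ^ e * ((1-δ) ^ q * ∫ t in α..T, t ^ q) := by
      have heq : Set.EqOn (fun t => lam ^ e * ((1-δ) * t) ^ q)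
          (fun t => lam ^ e * (1-δ) ^ q * t ^ q) (Set.uIcc α T) := by
        intro t ht
        simp only
        rw [Real.mul_rpow h1δ.le (hIcc t ht).le]
        ring
      rw [intervalIntegral.integral_congr heq, intervalIntegral.integral_const_mul,
        mul_assoc]
    exact h2 ▸ h1
  have hrpow_nonneg : (0:ℝ) ≤ (1-δ) ^ q := Real.rpow_nonneg h1δ.le _
  have hlam_e_nonneg : (0:ℝ) ≤ lam ^ e := Real.rpow_nonneg hlam0.le _
  have hne1 : (0:ℝ) < (n:ℝ) - 1 := by linarith
  refine ⟨fun hyp => ?_, fun hyp => ?_, fun hyp => ?_⟩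
  · -- case δ > 1/(n-1):  q + 1 < 0
    have hδn : 1 < δ * ((n:ℝ) - 1) := by
      have := (div_lt_iff₀ hne1).mp hyp
      linarith
    have hq1' : q + 1 < 0 := by
      rw [hq1]; exact div_neg_of_neg_of_pos (by linarith) h1δ
    have hJval : (∫ t in α..T, t ^ q) = (T ^ (q+1) - α ^ (q+1)) / (q+1) :=
      integral_rpow (Or.inr ⟨by intro h; rw [h] at hq1'; norm_num at hq1',
        Set.notMem_uIcc_of_lt hα0 hT0⟩)
    have hTq : (0:ℝ) ≤ T ^ (q+1) := Real.rpow_nonneg hT0.le _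
    have hJb : (T ^ (q+1) - α ^ (q+1)) / (q+1) ≤ α ^ (q+1) / (-(q+1)) := by
      rw [div_neg, sub_div]
      have h1 : T ^ (q+1) / (q+1) ≤ 0 := div_nonpos_iff.mpr (Or.inl ⟨hTq, hq1'.le⟩)
      linarith
    have hfin : (1-δ) ^ q * (∫ t in α..T, t ^ q) ≤ C := by
      calc (1-δ) ^ q * (∫ t in α..T, t ^ q)
          ≤ (1-δ) ^ q * (α ^ (q+1) / (-(q+1))) := by
            rw [hJval]; exact mul_le_mul_of_nonneg_left hJb hrpow_nonneg
        _ = C1 := by rw [hC1]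
        _ ≤ |C1| := le_abs_self _
        _ ≤ C := by rw [hCdef]; linarith [abs_nonneg C2, abs_nonneg C3]
    calc (∫ t in α..T, (max (lam - κ * t ^ (-(2:ℝ))) 0) ^ e * ((1-δ) * t) ^ q)
        ≤ lam ^ e * ((1-δ) ^ q * ∫ t in α..T, t ^ q) := hJ
      _ ≤ lam ^ e * C := mul_le_mul_of_nonneg_left hfin hlam_e_nonneg
      _ = C * lam ^ e := mul_comm _ _
  · -- case δ = 1/(n-1):  q = -1
    have hδn : δ * ((n:ℝ) - 1) = 1 := by
      rw [hyp]; field_simp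
    have hqm1 : q = -1 := by
      rw [hqdef, div_eq_iff h1δ.ne']
      linear_combination -hδn
    have hJval : (∫ t in α..T, t ^ q) = Real.log (T / α) := by
      rw [hqm1]
      simp only [Real.rpow_neg_one]
      exact integral_inv_of_pos hα0 hT0
    have hlog : Real.log (T / α) = s * Real.log lam + c₀ := by
      rw [Real.log_div hT0.ne' hα0.ne', hTdef,
        Real.log_mul (by positivity) (Real.rpow_pos_of_pos hlamμ _).ne',
        Real.log_rpow hlamμ, Real.log_div hlam0.ne' hμ₀.ne', hc0]
      ring
    have hbound : Real.log (T / α) ≤ (s + |c₀|) * Real.log lam := by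
      rw [hlog]
      have h1 : c₀ ≤ |c₀| * Real.log lam :=
        le_trans (le_abs_self _) (le_mul_of_one_le_right (abs_nonneg _) hloglam)
      rw [add_mul]
      have h2 : 0 ≤ s * Real.log lam := mul_nonneg hs0.le (by linarith)
      linarith
    have hC2C : C2 ≤ C := by
      calc C2 ≤ |C2| := le_abs_self _
        _ ≤ C := by
            have h1 : (0:ℝ) ≤ |C1| := abs_nonneg _
            have h3 : (0:ℝ) ≤ |C3| := abs_nonneg _
            rw [hCdef]; linarith
    calc (∫ t in α..T, (max (lam - κ * t ^ (-(2:ℝ))) 0) ^ e * ((1-δ) * t) ^ q)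
        ≤ lam ^ e * ((1-δ) ^ q * ∫ t in α..T, t ^ q) := hJ
      _ ≤ lam ^ e * ((1-δ) ^ q * ((s + |c₀|) * Real.log lam)) := by
          apply mul_le_mul_of_nonneg_left _ hlam_e_nonneg
          apply mul_le_mul_of_nonneg_left _ hrpow_nonneg
          rw [hJval]; exact hbound
      _ = C2 * lam ^ e * Real.log lam := by rw [hC2]; ring
      _ ≤ C * lam ^ e * Real.log lam := by
          apply mul_le_mul_of_nonneg_right _ (by linarith)
          exact mul_le_mul_of_nonneg_right hC2C hlam_e_nonneg
  · -- case δ < 1/(n-1):  q + 1 > 0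
    have hδn : δ * ((n:ℝ) - 1) < 1 := by
      have := (lt_div_iff₀ hne1).mp hyp
      linarith
    have hq1' : 0 < q + 1 := by
      rw [hq1]; exact div_pos (by linarith) h1δ
    have hJval : (∫ t in α..T, t ^ q) = (T ^ (q+1) - α ^ (q+1)) / (q+1) :=
      integral_rpow (Or.inl (by linarith))
    have hαq : (0:ℝ) ≤ α ^ (q+1) := Real.rpow_nonneg hα0.le _
    have hJb : (T ^ (q+1) - α ^ (q+1)) / (q+1) ≤ T ^ (q+1) / (q+1) :=
      (div_le_div_iff_of_pos_right hq1').mpr (by linarith)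
    have key : lam ^ e * ((1-δ) ^ q * (T ^ (q+1) / (q+1))) = C3 * lam ^ (1/(2*δ)) := by
      rw [hTdef, Real.mul_rpow (by positivity) (Real.rpow_nonneg hlamμ.le _),
        ← Real.rpow_mul hlamμ.le, Real.div_rpow hlam0.le hμ₀.le,
        hC3, ← hsum, Real.rpow_add hlam0]
      ring
    calc (∫ t in α..T, (max (lam - κ * t ^ (-(2:ℝ))) 0) ^ e * ((1-δ) * t) ^ q)
        ≤ lam ^ e * ((1-δ) ^ q * ∫ t in α..T, t ^ q) := hJ
      _ ≤ lam ^ e * ((1-δ) ^ q * (T ^ (q+1) / (q+1))) := by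
          apply mul_le_mul_of_nonneg_left _ hlam_e_nonneg
          apply mul_le_mul_of_nonneg_left _ hrpow_nonneg
          rw [hJval]; exact hJb
      _ = C3 * lam ^ (1/(2*δ)) := key
      _ ≤ C * lam ^ (1/(2*δ)) := by
          apply mul_le_mul_of_nonneg_right _ (Real.rpow_nonneg hlam0.le _)
          calc C3 ≤ |C3| := le_abs_self _
            _ ≤ C := by
                have h1 : (0:ℝ) ≤ |C1| := abs_nonneg _
                have h2 : (0:ℝ) ≤ |C2| := abs_nonneg _
                rw [hCdef]; linarith
end
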